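/- Let A be the adjacency matrix of a directed graph on n nodes with natural-number entries, and let k ≥ 2. Suppose nodes d and e have a k-th order diffusion from node a, i.e., (A^(k-1))_{a,d} ≥ 1 and (A^(k-1))_{a,e} ≥ 1 (so D⁽ᵏ⁾_{d,e} is non-zero), and suppose node a has an incoming walk of length m for some m ≥ 1, i.e., there exists a node c with (A^m)_{c,a} ≥ 1. Then the higher-order entry D⁽ᵏ⁺ᵐ⁾_{d,e} = ((Aᵀ)^(k+m-1) · A^(k+m-1))_{d,e} is also non-zero. (Densification claim, diffusion version.) -/
import Mathlib


open Matrix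

/-- Densification, diffusion version: if nodes `d` and `e` have a `k`-th order
diffusion from node `a` (`(A^(k-1))_{a,d} ≥ 1` and `(A^(k-1))_{a,e} ≥ 1`), and
`a` has an incoming walk of length `m ≥ 1` (some `c` with `(A^m)_{c,a} ≥ 1`),
then the higher-order entry
`D⁽ᵏ⁺ᵐ⁾_{d,e} = ((Aᵀ)^(k+m-1) * A^(k+m-1))_{d,e}` is also non-zero. -/
theorem diffusion_matrix_densification
    {n : ℕ} (A : Matrix (Fin n) (Fin n) ℕ) (k m : ℕ) (hk : 2 ≤ k) (hm : 1 ≤ m)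
    (d e a : Fin n)
    (hd : 1 ≤ (A ^ (k - 1)) a d) (he : 1 ≤ (A ^ (k - 1)) a e)
    (hwalk : ∃ c : Fin n, 1 ≤ (A ^ m) c a) :
    (Aᵀ ^ (k + m - 1) * A ^ (k + m - 1)) d e ≠ 0 := by
  obtain ⟨c, hc⟩ := hwalk
  have hsplit : k + m - 1 = m + (k - 1) := by omega
  have hpow : A ^ (k + m - 1) = A ^ m * A ^ (k - 1) := by
    rw [hsplit, pow_add]
  have key : ∀ x : Fin n, 1 ≤ (A ^ (k - 1)) a x → 1 ≤ (A ^ (k + m - 1)) c x := by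
    intro x hx
    rw [hpow]
    calc 1 = 1 * 1 := by ring
    _ ≤ (A ^ m) c a * (A ^ (k - 1)) a x := Nat.mul_le_mul hc hx
    _ ≤ (A ^ m * A ^ (k - 1)) c x := by
        rw [Matrix.mul_apply]
        exact Finset.single_le_sum (f := fun j => (A ^ m) c j * (A ^ (k - 1)) j x) (fun i _ => Nat.zero_le _) (Finset.mem_univ a)
  have hcd := key d hd
  have hce := key e he
  have : 1 ≤ (Aᵀ ^ (k + m - 1) * A ^ (k + m - 1)) d e := by
    rw [← Matrix.transpose_pow, Matrix.mul_apply]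
    calc 1 = 1 * 1 := by ring
    _ ≤ (A ^ (k + m - 1))ᵀ d c * (A ^ (k + m - 1)) c e := by
        rw [Matrix.transpose_apply]; exact Nat.mul_le_mul hcd hce
    _ ≤ _ := Finset.single_le_sum (f := fun j => (A ^ (k + m - 1))ᵀ d j * (A ^ (k + m - 1)) j e) (fun i _ => Nat.zero_le _) (Finset.mem_univ c)
  omega
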